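/- Let G be a graph with no cycle of length 3 and no cycle of length 5, let F_1, …, F_n be matchings of size n in G, and let R be a rainbow matching of maximum size. Suppose G₁ ≠ G₂ are two unrepresented matchings and e, f ∈ R are such that the pair {e, f} is half-G₁-wasteful and half-G₂-wasteful. Then the number of unrepresented matchings G for which e is half-G-wasteful is exactly 2. -/

import Mathlib

/-- Two graph edges intersect (share a vertex). -/
def Meets {V : Type*} (e f : Sym2 V) : Prop := ∃ v, v ∈ e ∧ v ∈ f

/-- `g` intersects `e` and no other edge of the matching `R`. -/
def MeetsOnly {V : Type*} (R : Finset (Sym2 V)) (g e : Sym2 V) : Prop :=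
  Meets g e ∧ ∀ f ∈ R, f ≠ e → ¬ Meets g f

/-- The pair `{e, f}` of edges of `R` is half-`A`-wasteful: there are edges
`g_e, g_f, g_{ef} ∈ A` such that `g_e` intersects `e` and no other edge of `R`, `g_f`
intersects `f` and no other edge of `R`, and `g_{ef}` intersects both `e` and `f`. -/
def HalfWastefulPair {V : Type*} (R A : Finset (Sym2 V)) (e f : Sym2 V) : Prop :=
  ∃ ge ∈ A, ∃ gf ∈ A, ∃ gef ∈ A,
    MeetsOnly R ge e ∧ MeetsOnly R gf f ∧ Meets gef e ∧ Meets gef f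

/-- The edge `e ∈ R` is half-`A`-wasteful: some pair `{e, f}` with `f ∈ R` is
half-`A`-wasteful. -/
def HalfWasteful {V : Type*} (R A : Finset (Sym2 V)) (e : Sym2 V) : Prop :=
  ∃ f ∈ R, f ≠ e ∧ HalfWastefulPair R A e f

/-- The number of unrepresented matchings `F i` (i.e. `i ∉ I`) for which `e` is
half-`F i`-wasteful. -/
noncomputable def hwDeg {V : Type*} {n : ℕ} (F : Fin n → Finset (Sym2 V))
    (I : Finset (Fin n)) (R : Finset (Sym2 V)) (e : Sym2 V) : ℕ :=
  {i : Fin n | i ∉ I ∧ HalfWasteful R (F i) e}.ncard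

/-!
An edge of an unrepresented matching `A` that meets only `e` among the edges of `R`, while another
edge of `A` meets `e` and a second edge of `R`, hangs off `e`: one endpoint lies on `e`, the other
is not covered by `R`. Two such pendant edges at `e` from distinct unrepresented matchings must
meet, or they would replace `e` and enlarge `R`; as `G` has no triangle, they share their endpoint
on `e`. If a third unrepresented matching `A₃` made `e` half-wasteful, then the edge `g_{ef}` of
`A₁`, the pendant edge at `f` of `A₂` and the pendant edge at `e` of `A₃` would be pairwise
disjoint: the last two could only meet at their free ends, closing a 5-cycle with `e`, `g_{ef}`
and `f`. Replacing `e` and `f` in `R` by these three edges would give a larger rainbow matching.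
-/

open Finset SimpleGraph

section Edges

variable {V : Type*}

theorem meets_self (e : Sym2 V) : Meets e e := by
  induction e using Sym2.ind with
  | _ x y => exact ⟨x, by simp, by simp⟩

theorem Meets.symm {e f : Sym2 V} (h : Meets e f) : Meets f e :=
  let ⟨v, hve, hvf⟩ := h
  ⟨v, hvf, hve⟩

theorem Meets.mem_or_mem {h e f : Sym2 V} (he : Meets h e) (hf : Meets h f) (hef : ¬ Meets e f)
    {v : V} (hv : v ∈ h) : v ∈ e ∨ v ∈ f := by
  obtain ⟨p, hph, hpe⟩ := he
  obtain ⟨q, hqh, hqf⟩ := hf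
  have hpq : p ≠ q := fun hpq => hef ⟨p, hpe, hpq ▸ hqf⟩
  rw [(Sym2.mem_and_mem_iff hpq).1 ⟨hph, hqh⟩, Sym2.mem_iff] at hv
  rcases hv with rfl | rfl
  exacts [Or.inl hpe, Or.inr hqf]

theorem SimpleGraph.exists_isCycle_length_eq_five {G : SimpleGraph V} {a b c d x : V}
    (hab : G.Adj a b) (hbc : G.Adj b c) (hcd : G.Adj c d) (hdx : G.Adj d x) (hxa : G.Adj x a)
    (hac : a ≠ c) (had : a ≠ d) (hbd : b ≠ d) (hbx : b ≠ x) (hcx : c ≠ x) :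
    ∃ w : G.Walk a a, w.IsCycle ∧ w.length = 5 := by
  refine ⟨.cons hab (.cons hbc (.cons hcd (.cons hdx (.cons hxa .nil)))), ?_, rfl⟩
  rw [Walk.cons_isCycle_iff]
  simp [Walk.isPath_def, hab.ne, hbc.ne, hcd.ne, hdx.ne, hxa.ne, hab.ne', hxa.ne', hac, had, hbd,
    hbx, hcx, hac.symm, had.symm]

theorem SimpleGraph.not_meets_of_length_ne_five {G : SimpleGraph V}
    (hG : ∀ v (w : G.Walk v v), w.IsCycle → w.length ≠ 5) {e f h : Sym2 V} (he : e ∈ G.edgeSet)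
    (hf : f ∈ G.edgeSet) (hh : h ∈ G.edgeSet) (hef : ¬ Meets e f) (hhe : Meets h e)
    (hhf : Meets h f) {a b x y : V} (ha : a ∈ e) (hah : a ∉ h) (hb : b ∈ f) (hbh : b ∉ h)
    (hxe : x ∉ e) (hxf : x ∉ f) (hye : y ∉ e) (hyf : y ∉ f) (hax : G.Adj a x) (hby : G.Adj b y) :
    ¬ Meets s(a, x) s(b, y) := by
  rintro ⟨v, hv, hv'⟩
  rw [Sym2.mem_iff] at hv hv'
  rcases hv with rfl | rfl <;> rcases hv' with rfl | rfl
  · exact hef ⟨_, ha, hb⟩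
  · exact hye ha
  · exact hxf hb
  obtain ⟨a', ha'h, ha'⟩ := hhe
  obtain ⟨b', hb'h, hb'⟩ := hhf
  have hab' : a' ≠ b' := fun heq => hef ⟨a', ha', heq ▸ hb'⟩
  have hh' : h = s(a', b') := (Sym2.mem_and_mem_iff hab').1 ⟨ha'h, hb'h⟩
  have he' : e = s(a, a') :=
    (Sym2.mem_and_mem_iff fun heq : a = a' => hah (heq ▸ ha'h)).1 ⟨ha, ha'⟩
  have hf' : f = s(b', b) :=
    (Sym2.mem_and_mem_iff fun heq : b' = b => hbh (heq ▸ hb'h)).1 ⟨hb', hb⟩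
  obtain ⟨w, hw, hlen⟩ := exists_isCycle_length_eq_five hax hby.symm
    (G.mem_edgeSet.1 (hf' ▸ hf)).symm (G.mem_edgeSet.1 (hh' ▸ hh)).symm
    (G.mem_edgeSet.1 (he' ▸ he)).symm (fun heq => hef ⟨a, ha, heq ▸ hb⟩)
    (fun heq => hef ⟨a, ha, heq ▸ hb'⟩) (fun heq => hxf (heq ▸ hb')) (fun heq => hxe (heq ▸ ha'))
    (fun heq => hef ⟨a', ha', heq ▸ hb⟩)
  exact hG a w hw hlen

def IsEdgeMatching (M : Finset (Sym2 V)) : Prop :=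
  (M : Set (Sym2 V)).Pairwise fun e f => ¬ Meets e f

variable {R A : Finset (Sym2 V)} {g h e : Sym2 V}

theorem MeetsOnly.not_meets (hA : IsEdgeMatching A) (hgA : g ∈ A) (hhA : h ∈ A)
    (hg : MeetsOnly R g e) {X : Sym2 V} (hX : X ∈ R) (hXe : X ≠ e) (hhX : Meets h X) :
    ¬ Meets g h :=
  hA hgA hhA fun hgh => hg.2 X hX hXe (hgh ▸ hhX)

theorem MeetsOnly.exists_eq_mk (hg : MeetsOnly R g e) (hgd : ¬ g.IsDiag) (hhe : Meets h e)
    (hgh : ¬ Meets g h) : ∃ a ∈ e, ∃ x, g = s(a, x) ∧ a ∉ h ∧ ∀ p ∈ R, x ∉ p := by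
  obtain ⟨a, hag, hae⟩ := hg.1
  obtain ⟨w, hwh, hwe⟩ := hhe
  refine ⟨a, hae, Sym2.Mem.other hag, (Sym2.other_spec hag).symm,
    fun hah => hgh ⟨a, hag, hah⟩, fun p hp hxp => ?_⟩
  by_cases hpe : p = e
  · subst hpe
    have hpg : p = g :=
      ((Sym2.mem_and_mem_iff (Sym2.other_ne hgd hag).symm).1 ⟨hae, hxp⟩).trans
        (Sym2.other_spec hag)
    exact hgh ⟨w, hpg ▸ hwe, hwh⟩
  · exact hg.2 p hp hpe ⟨_, Sym2.other_mem hag, hxp⟩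

end Edges

section Rainbow

variable {V : Type*} {n : ℕ}

def IsRainbowMatching (F : Fin n → Finset (Sym2 V)) (J : Finset (Fin n)) (d : Fin n → Sym2 V) :
    Prop :=
  (∀ i ∈ J, d i ∈ F i) ∧ (J : Set (Fin n)).Pairwise fun i j => ¬ Meets (d i) (d j)

def IsMaxRainbowMatching (F : Fin n → Finset (Sym2 V)) (I : Finset (Fin n))
    (c : Fin n → Sym2 V) : Prop :=
  IsRainbowMatching F I c ∧ ∀ J d, IsRainbowMatching F J d → J.card ≤ I.card

variable {F : Fin n → Finset (Sym2 V)} {I : Finset (Fin n)} {c : Fin n → Sym2 V}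

theorem IsRainbowMatching.apply_ne (hI : IsRainbowMatching F I c) {i j : Fin n} (hi : i ∈ I)
    (hj : j ∈ I) (hij : i ≠ j) : c i ≠ c j :=
  fun hc => hI.2 hi hj hij (hc ▸ meets_self (c j))

theorem IsRainbowMatching.not_meets_of_meetsOnly [DecidableEq V] (hI : IsRainbowMatching F I c)
    {g : Sym2 V} {j k : Fin n} (hg : MeetsOnly (I.image c) g (c k)) (hj : j ∈ I) (hk : k ∈ I)
    (hjk : j ≠ k) : ¬ Meets g (c j) :=
  hg.2 _ (mem_image_of_mem c hj) (hI.apply_ne hj hk hjk)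

theorem IsMaxRainbowMatching.card_le_of_exchange (hR : IsMaxRainbowMatching F I c)
    {K : Finset (Fin n)} (hK : K ⊆ I) {m : ℕ} {τ : Fin m → Fin n} (hτ : Function.Injective τ)
    (hτI : ∀ k, τ k ∉ I) {g : Fin m → Sym2 V} (hg : ∀ k, g k ∈ F (τ k))
    (hgg : Pairwise fun k l => ¬ Meets (g k) (g l))
    (hgc : ∀ k, ∀ j ∈ I \ K, ¬ Meets (g k) (c j)) :
    m ≤ K.card := by
  classical
  set T := univ.map ⟨τ, hτ⟩
  set d := Function.extend τ g c
  have hdisj : Disjoint (I \ K) T := by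
    refine Finset.disjoint_left.2 fun t ht htT => ?_
    obtain ⟨k, -, rfl⟩ := mem_map.1 htT
    exact hτI k (mem_sdiff.1 ht).1
  have hcases : ∀ t ∈ (I \ K) ∪ T, (∃ k, t = τ k ∧ d t = g k) ∨ (t ∈ I \ K ∧ d t = c t) := by
    intro t ht
    rcases mem_union.1 ht with ht | ht
    · refine Or.inr ⟨ht, Function.extend_apply' _ _ _ ?_⟩
      rintro ⟨k, rfl⟩
      exact hτI k (mem_sdiff.1 ht).1
    · obtain ⟨k, -, rfl⟩ := mem_map.1 ht
      exact Or.inl ⟨k, rfl, hτ.extend_apply _ _ _⟩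
  have hrainbow : IsRainbowMatching F ((I \ K) ∪ T) d := by
    refine ⟨fun t ht => ?_, fun t ht t' ht' htt' => ?_⟩
    · rcases hcases t ht with ⟨k, rfl, hd⟩ | ⟨hI, hd⟩
      · exact hd ▸ hg k
      · exact hd ▸ hR.1.1 t (mem_sdiff.1 hI).1
    · rcases hcases t ht with ⟨k, rfl, hd⟩ | ⟨hI, hd⟩ <;>
        rcases hcases t' ht' with ⟨l, rfl, hd'⟩ | ⟨hI', hd'⟩ <;> rw [hd, hd']
      · exact hgg fun hkl => htt' (hkl ▸ rfl)
      · exact hgc k t' hI'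
      · exact fun h => hgc l t hI h.symm
      · exact hR.1.2 (mem_sdiff.1 hI).1 (mem_sdiff.1 hI').1 htt'
  have hcard := hR.2 _ _ hrainbow
  rw [card_union_of_disjoint hdisj, card_sdiff_of_subset hK, card_map, card_univ,
    Fintype.card_fin] at hcard
  have := card_le_card hK
  omega

theorem IsMaxRainbowMatching.meets_of_meetsOnly [DecidableEq V] (hR : IsMaxRainbowMatching F I c)
    {i j k : Fin n} (hi : i ∉ I) (hj : j ∉ I) (hij : i ≠ j) (hk : k ∈ I) {g g' : Sym2 V}
    (hg : g ∈ F i) (hg' : g' ∈ F j) (hgk : MeetsOnly (I.image c) g (c k))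
    (hg'k : MeetsOnly (I.image c) g' (c k)) : Meets g g' := by
  by_contra hgg'
  have := hR.card_le_of_exchange (K := {k}) (by simpa using hk) (τ := ![i, j]) (g := ![g, g'])
    (by intro a b; fin_cases a <;> fin_cases b <;> simp [hij, hij.symm])
    (by intro a; fin_cases a <;> simp [hi, hj])
    (by intro a; fin_cases a <;> simpa)
    (by
      intro a b hab
      fin_cases a <;> fin_cases b
      exacts [absurd rfl hab, hgg', fun h => hgg' h.symm, absurd rfl hab])
    (by
      intro a l hl
      obtain ⟨hlI, hlk⟩ := mem_sdiff.1 hl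
      fin_cases a
      · exact hR.1.not_meets_of_meetsOnly hgk hlI hk (by simpa using hlk)
      · exact hR.1.not_meets_of_meetsOnly hg'k hlI hk (by simpa using hlk))
  simp at this

theorem IsMaxRainbowMatching.meets_of_exchange_three [DecidableEq V]
    (hR : IsMaxRainbowMatching F I c) {i₁ i₂ i₃ : Fin n} (hi₁ : i₁ ∉ I) (hi₂ : i₂ ∉ I)
    (hi₃ : i₃ ∉ I) (h₁₂ : i₁ ≠ i₂) (h₁₃ : i₁ ≠ i₃) (h₂₃ : i₂ ≠ i₃) {k k' : Fin n} (hk : k ∈ I)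
    (hk' : k' ∈ I) {h g g' : Sym2 V} (hh : h ∈ F i₁) (hg : g ∈ F i₂) (hg' : g' ∈ F i₃)
    (hhR : ∀ v ∈ h, v ∈ c k ∨ v ∈ c k') (hgk' : MeetsOnly (I.image c) g (c k'))
    (hg'k : MeetsOnly (I.image c) g' (c k)) (hhg : ¬ Meets h g) (hhg' : ¬ Meets h g') :
    Meets g g' := by
  by_contra hgg'
  have := hR.card_le_of_exchange (K := {k, k'}) (by simp [insert_subset_iff, hk, hk'])
    (τ := ![i₁, i₂, i₃]) (g := ![h, g, g'])
    (by
      intro a b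
      fin_cases a <;> fin_cases b <;> simp [h₁₂, h₁₃, h₂₃, h₁₂.symm, h₁₃.symm, h₂₃.symm])
    (by intro a; fin_cases a <;> simpa)
    (by intro a; fin_cases a <;> simpa)
    (by
      intro a b hab
      fin_cases a <;> fin_cases b
      exacts [absurd rfl hab, hhg, hhg', fun h => hhg h.symm, absurd rfl hab, hgg',
        fun h => hhg' h.symm, fun h => hgg' h.symm, absurd rfl hab])
    (by
      intro a l hl
      obtain ⟨hlI, hlk⟩ := mem_sdiff.1 hl
      simp only [mem_insert, mem_singleton, not_or] at hlk
      fin_cases a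
      · rintro ⟨v, hvh, hvl⟩
        rcases hhR v hvh with hv | hv
        · exact hR.1.2 hk hlI (Ne.symm hlk.1) ⟨v, hv, hvl⟩
        · exact hR.1.2 hk' hlI (Ne.symm hlk.2) ⟨v, hv, hvl⟩
      · exact hR.1.not_meets_of_meetsOnly hgk' hlI hk' hlk.2
      · exact hR.1.not_meets_of_meetsOnly hg'k hlI hk hlk.1)
  have := this.trans card_le_two
  omega

variable {G : SimpleGraph V}

theorem IsMaxRainbowMatching.eq_of_meetsOnly [DecidableEq V] (hG : G.CliqueFree 3)
    (hFG : ∀ i, ∀ g ∈ F i, g ∈ G.edgeSet) (hR : IsMaxRainbowMatching F I c) {i j k : Fin n}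
    (hi : i ∉ I) (hj : j ∉ I) (hij : i ≠ j) (hk : k ∈ I) {a x a' x' : V} (ha : a ∈ c k)
    (ha' : a' ∈ c k) (hx : ∀ p ∈ I.image c, x ∉ p) (hx' : ∀ p ∈ I.image c, x' ∉ p)
    (hg : s(a, x) ∈ F i) (hg' : s(a', x') ∈ F j) (hgk : MeetsOnly (I.image c) s(a, x) (c k))
    (hg'k : MeetsOnly (I.image c) s(a', x') (c k)) : a = a' := by
  have hck : c k ∈ I.image c := mem_image_of_mem c hk
  obtain ⟨v, hv, hv'⟩ := hR.meets_of_meetsOnly hi hj hij hk hg hg' hgk hg'k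
  rw [Sym2.mem_iff] at hv hv'
  rcases hv with rfl | rfl <;> rcases hv' with rfl | rfl
  · rfl
  · exact absurd ha (hx' _ hck)
  · exact absurd ha' (hx _ hck)
  by_contra haa'
  have hck' : c k = s(a, a') := (Sym2.mem_and_mem_iff haa').1 ⟨ha, ha'⟩
  refine hG {a, a', v} (is3Clique_triple_iff.2 ⟨?_, ?_, ?_⟩)
  · exact G.mem_edgeSet.1 (hck' ▸ hFG k _ (hR.1.1 k hk))
  · exact hFG i _ hg
  · exact hFG j _ hg'

theorem IsMaxRainbowMatching.not_halfWasteful_of_halfWastefulPair [DecidableEq V]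
    (hG3 : G.CliqueFree 3) (hG5 : ∀ v (w : G.Walk v v), w.IsCycle → w.length ≠ 5)
    (hFG : ∀ i, ∀ g ∈ F i, g ∈ G.edgeSet) (hF : ∀ i, IsEdgeMatching (F i))
    (hR : IsMaxRainbowMatching F I c) {i₁ i₂ i₃ : Fin n} (hi₁ : i₁ ∉ I) (hi₂ : i₂ ∉ I)
    (hi₃ : i₃ ∉ I) (h₁₂ : i₁ ≠ i₂) (h₁₃ : i₁ ≠ i₃) (h₂₃ : i₂ ≠ i₃) {k k' : Fin n} (hk : k ∈ I)
    (hk' : k' ∈ I) (hkk' : k ≠ k')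
    (hw₁ : HalfWastefulPair (I.image c) (F i₁) (c k) (c k'))
    (hw₂ : HalfWastefulPair (I.image c) (F i₂) (c k) (c k')) :
    ¬ HalfWasteful (I.image c) (F i₃) (c k) := by
  have hRk : c k ∈ I.image c := mem_image_of_mem c hk
  have hRk' : c k' ∈ I.image c := mem_image_of_mem c hk'
  have hne : c k ≠ c k' := hR.1.apply_ne hk hk' hkk'
  have hdiag : ∀ i, ∀ g ∈ F i, ¬ g.IsDiag := fun i g hg => G.not_isDiag_of_mem_edgeSet (hFG i g hg)
  rintro ⟨f₃, hf₃, hf₃k, ge₃, hge₃, -, -, gef₃, hgef₃, hge₃o, -, hgef₃e, hgef₃f⟩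
  obtain ⟨ge₁, hge₁, gf₁, hgf₁, gef₁, hgef₁, hge₁o, hgf₁o, hgef₁e, hgef₁f⟩ := hw₁
  obtain ⟨-, -, gf₂, hgf₂, gef₂, hgef₂, -, hgf₂o, hgef₂e, hgef₂f⟩ := hw₂
  obtain ⟨a, ha, x₁, rfl, hagef₁, hx₁⟩ := hge₁o.exists_eq_mk (hdiag _ _ hge₁) hgef₁e
    (hge₁o.not_meets (hF i₁) hge₁ hgef₁ hRk' hne.symm hgef₁f)
  obtain ⟨b', hb', z₁, rfl, hbgef₁, hz₁⟩ := hgf₁o.exists_eq_mk (hdiag _ _ hgf₁) hgef₁f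
    (hgf₁o.not_meets (hF i₁) hgf₁ hgef₁ hRk hne hgef₁e)
  obtain ⟨b, hb, z₂, rfl, -, hz₂⟩ := hgf₂o.exists_eq_mk (hdiag _ _ hgf₂) hgef₂f
    (hgf₂o.not_meets (hF i₂) hgf₂ hgef₂ hRk hne hgef₂e)
  obtain ⟨a₃, ha₃, x₃, rfl, -, hx₃⟩ := hge₃o.exists_eq_mk (hdiag _ _ hge₃) hgef₃e
    (hge₃o.not_meets (hF i₃) hge₃ hgef₃ hf₃ hf₃k hgef₃f)
  obtain rfl : b' = b :=
    hR.eq_of_meetsOnly hG3 hFG hi₁ hi₂ h₁₂ hk' hb' hb hz₁ hz₂ hgf₁ hgf₂ hgf₁o hgf₂o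
  obtain rfl : a = a₃ :=
    hR.eq_of_meetsOnly hG3 hFG hi₁ hi₃ h₁₃ hk ha ha₃ hx₁ hx₃ hge₁ hge₃ hge₁o hge₃o
  have hdisj : ¬ Meets (c k) (c k') := hR.1.2 hk hk' hkk'
  have hgef₁R : ∀ v ∈ gef₁, v ∈ c k ∨ v ∈ c k' := fun v => hgef₁e.mem_or_mem hgef₁f hdisj
  have hnotMem_gef₁ : ∀ {y}, (∀ p ∈ I.image c, y ∉ p) → y ∉ gef₁ := fun hy hygef =>
    (hgef₁R _ hygef).elim (hy _ hRk) (hy _ hRk')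
  refine G.not_meets_of_length_ne_five hG5 (hFG k _ (hR.1.1 k hk)) (hFG k' _ (hR.1.1 k' hk'))
    (hFG i₁ _ hgef₁) hdisj hgef₁e hgef₁f ha hagef₁ hb hbgef₁ (hx₃ _ hRk) (hx₃ _ hRk')
    (hz₂ _ hRk) (hz₂ _ hRk') (hFG i₃ _ hge₃) (hFG i₂ _ hgf₂) ?_
  refine (hR.meets_of_exchange_three hi₁ hi₂ hi₃ h₁₂ h₁₃ h₂₃ hk hk' hgef₁ hgf₂ hge₃ hgef₁R hgf₂o
    hge₃o ?_ ?_).symm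
  · rintro ⟨v, hvgef, hv⟩
    rcases Sym2.mem_iff.1 hv with rfl | rfl
    exacts [hbgef₁ hvgef, hnotMem_gef₁ hz₂ hvgef]
  · rintro ⟨v, hvgef, hv⟩
    rcases Sym2.mem_iff.1 hv with rfl | rfl
    exacts [hagef₁ hvgef, hnotMem_gef₁ hx₃ hvgef]

end Rainbow

theorem stmt_13_general {V : Type*} [DecidableEq V] (G : SimpleGraph V) (n : ℕ)
    (hfree : ∀ (v : V) (w : G.Walk v v), w.IsCycle → w.length ≠ 3 ∧ w.length ≠ 5)
    (F : Fin n → Finset (Sym2 V))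
    (hedges : ∀ i, ∀ e ∈ F i, e ∈ G.edgeSet)
    (hmatch : ∀ i, ∀ e ∈ F i, ∀ f ∈ F i, e ≠ f → ∀ v, v ∈ e → v ∉ f)
    (I : Finset (Fin n)) (c : Fin n → Sym2 V)
    (hc : ∀ i ∈ I, c i ∈ F i)
    (hdisj : ∀ i ∈ I, ∀ j ∈ I, i ≠ j → ∀ v, v ∈ c i → v ∉ c j)
    (hmax : ∀ (J : Finset (Fin n)) (d : Fin n → Sym2 V),
      (∀ i ∈ J, d i ∈ F i) →
      (∀ i ∈ J, ∀ j ∈ J, i ≠ j → ∀ v, v ∈ d i → v ∉ d j) →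
      J.card ≤ I.card)
    (i₁ i₂ : Fin n) (hi₁ : i₁ ∉ I) (hi₂ : i₂ ∉ I) (hne : i₁ ≠ i₂)
    (e f : Sym2 V) (he : e ∈ I.image c) (hf : f ∈ I.image c) (hef : e ≠ f)
    (hw₁ : HalfWastefulPair (I.image c) (F i₁) e f)
    (hw₂ : HalfWastefulPair (I.image c) (F i₂) e f) :
    hwDeg F I (I.image c) e = 2 := by
  have hF : ∀ i, IsEdgeMatching (F i) := fun i e he f hf hef ⟨v, hve, hvf⟩ =>
    hmatch i e he f hf hef v hve hvf
  have hR : IsMaxRainbowMatching F I c :=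
    ⟨⟨hc, fun i hi j hj hij ⟨v, hvi, hvj⟩ => hdisj i hi j hj hij v hvi hvj⟩,
      fun J d hJ => hmax J d hJ.1 fun i hi j hj hij v hvi hvj => hJ.2 hi hj hij ⟨v, hvi, hvj⟩⟩
  have hG3 : G.CliqueFree 3 := fun s hs => by
    obtain ⟨v, w, hw, hlen⟩ := is3Clique_iff_exists_cycle_length_three.1 ⟨s, hs⟩
    exact (hfree v w hw).1 hlen
  obtain ⟨k, hk, rfl⟩ := mem_image.1 he
  obtain ⟨k', hk', rfl⟩ := mem_image.1 hf
  have hS : {i | i ∉ I ∧ HalfWasteful (I.image c) (F i) (c k)} = {i₁, i₂} := by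
    ext i
    refine ⟨fun ⟨hi, hw⟩ => ?_, ?_⟩
    · by_contra hi'
      simp only [Set.mem_insert_iff, Set.mem_singleton_iff, not_or] at hi'
      exact hR.not_halfWasteful_of_halfWastefulPair hG3 (fun v w hw => (hfree v w hw).2) hedges
        hF hi₁ hi₂ hi hne (Ne.symm hi'.1) (Ne.symm hi'.2) hk hk' (fun h => hef (h ▸ rfl)) hw₁
        hw₂ hw
    · rintro (rfl | rfl)
      exacts [⟨hi₁, c k', hf, Ne.symm hef, hw₁⟩, ⟨hi₂, c k', hf, Ne.symm hef, hw₂⟩]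
  rw [hwDeg, hS, Set.ncard_pair hne]

/-- In a graph with no 3-cycle and no 5-cycle, with `F₁, …, Fₙ`
matchings of size `n` and `R = I.image c` a maximum-size rainbow matching: if two
distinct unrepresented matchings `F i₁ ≠ F i₂` (distinct members, `i₁ ≠ i₂`) are such
that the pair `{e, f}` of edges of `R` is half-wasteful for both, then the number of
unrepresented matchings `G` for which `e` is half-`G`-wasteful is exactly 2. -/
theorem stmt_13 {V : Type*} [DecidableEq V] (G : SimpleGraph V) (n : ℕ)
    (hfree : ∀ (v : V) (w : G.Walk v v), w.IsCycle → w.length ≠ 3 ∧ w.length ≠ 5)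
    (F : Fin n → Finset (Sym2 V))
    (hedges : ∀ i, ∀ e ∈ F i, e ∈ G.edgeSet)
    (hmatch : ∀ i, ∀ e ∈ F i, ∀ f ∈ F i, e ≠ f → ∀ v, v ∈ e → v ∉ f)
    (hsize : ∀ i, (F i).card = n)
    (I : Finset (Fin n)) (c : Fin n → Sym2 V)
    (hc : ∀ i ∈ I, c i ∈ F i)
    (hdisj : ∀ i ∈ I, ∀ j ∈ I, i ≠ j → ∀ v, v ∈ c i → v ∉ c j)
    (hmax : ∀ (J : Finset (Fin n)) (d : Fin n → Sym2 V),
      (∀ i ∈ J, d i ∈ F i) →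
      (∀ i ∈ J, ∀ j ∈ J, i ≠ j → ∀ v, v ∈ d i → v ∉ d j) →
      J.card ≤ I.card)
    (i₁ i₂ : Fin n) (hi₁ : i₁ ∉ I) (hi₂ : i₂ ∉ I) (hne : i₁ ≠ i₂)
    (e f : Sym2 V) (he : e ∈ I.image c) (hf : f ∈ I.image c) (hef : e ≠ f)
    (hw₁ : HalfWastefulPair (I.image c) (F i₁) e f)
    (hw₂ : HalfWastefulPair (I.image c) (F i₂) e f) :
    hwDeg F I (I.image c) e = 2 :=
  stmt_13_general G n hfree F hedges hmatch I c hc hdisj hmax i₁ i₂ hi₁ hi₂ hne e f he hf hef hw₁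
    hw₂
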